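/- arXiv:1901.02974 — 2 statements merged into one kernel-verified Lean document; each statement's English description precedes it below -/
import Mathlib

section
/- The planar layer system du/dτ = v + u²/2, dv/dτ = -u has the first integral k(u,v) = -(u² + 2v - 2)e^v; that is, k is constant along every solution. -/
/-!
Along a solution, `d/dτ (u² + 2v - 2) = 2u(v + u²/2) - 2u = u(u² + 2v - 2)`, while
`d/dτ eᵛ = -u eᵛ`; the two growth rates cancel in the product, so `k` has zero derivative
along every solution and is therefore constant.
-/

open Real

noncomputable def layerIntegral (u v : ℝ) : ℝ := -((u ^ 2 + 2 * v - 2) * exp v)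

theorem hasDerivAt_layerIntegral_comp {u v : ℝ → ℝ} {u' v' t : ℝ}
    (hu : HasDerivAt u u' t) (hv : HasDerivAt v v' t) :
    HasDerivAt (fun s => layerIntegral (u s) (v s))
      (-((2 * u t * u' + 2 * v') * exp (v t) + (u t ^ 2 + 2 * v t - 2) * (exp (v t) * v'))) t := by
  have hpoly : HasDerivAt (fun s => u s ^ 2 + 2 * v s - 2) (2 * u t * u' + 2 * v') t := by
    simpa using ((hu.pow 2).add (hv.const_mul 2)).sub_const 2
  exact (hpoly.mul hv.exp).neg

theorem hasDerivAt_layerIntegral_of_isSolution {u v : ℝ → ℝ}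
    (hu : ∀ t, HasDerivAt u (v t + u t ^ 2 / 2) t) (hv : ∀ t, HasDerivAt v (-u t) t) (t : ℝ) :
    HasDerivAt (fun s => layerIntegral (u s) (v s)) 0 t := by
  convert hasDerivAt_layerIntegral_comp (hu t) (hv t) using 1
  ring

/-- The planar layer system `u' = v + u²/2`, `v' = -u` has the first integral
`k(u,v) = -(u² + 2v - 2)eᵛ`: it is constant along every solution. -/
theorem stmt_5 (u v : ℝ → ℝ)
    (hu : ∀ t, HasDerivAt u (v t + (u t) ^ 2 / 2) t)
    (hv : ∀ t, HasDerivAt v (-(u t)) t) :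
    ∀ t, -(((u t) ^ 2 + 2 * v t - 2) * Real.exp (v t)) =
      -(((u 0) ^ 2 + 2 * v 0 - 2) * Real.exp (v 0)) := by
  have hk := hasDerivAt_layerIntegral_of_isSolution hu hv
  exact fun t => is_const_of_deriv_eq_zero (fun s => (hk s).differentiableAt)
    (fun s => (hk s).deriv) t 0
end

section
/- For the planar system du/dτ = v + u²/2, dv/dτ = -u, the level set {(u,v) : (u² + 2v - 2)e^v = -k} with 0 < k < 2 is a nonempty compact invariant set surrounding the unique equilibrium (0,0), and as k → 2⁻ the level sets shrink to the point (0,0); moreover on the level set k = 0, i.e. the parabola v = 1 - u²/2 (together with the region above it), solutions are unbounded. -/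
/-!
`H(u,v) = (u² + 2v - 2)eᵛ` is constant along solutions. Writing `H = u²eᵛ + (2v - 2)eᵛ` and
using `(1 - v)eᵛ ≤ 1`, `H` has a strict global minimum `-2` at the origin, and its sublevel sets
`{H ≤ -k}`, `k > 0`, are compact; so the levels `-k ∈ (-2, 0)` are compact invariant sets, and by
compactness they shrink to the origin as `k → 2`. On `{H ≥ 0}` one has `u' = v + u²/2 ≥ 1`, so
`u` grows at least linearly.
-/

open Set Metric

theorem exists_sublevel_subset_ball {X : Type*} [PseudoMetricSpace X] {f : X → ℝ}
    (hf : Continuous f) {x₀ : X} (hmin : ∀ x, x ≠ x₀ → f x₀ < f x) {c : ℝ} (hc : f x₀ < c)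
    (hK : IsCompact {x | f x ≤ c}) {ε : ℝ} (hε : 0 < ε) :
    ∃ c' > f x₀, {x | f x < c'} ⊆ ball x₀ ε := by
  set K := {x | f x ≤ c} \ ball x₀ ε
  rcases K.eq_empty_or_nonempty with hK₀ | hKne
  · refine ⟨c, hc, fun x hx => by_contra fun hout => ?_⟩
    exact hK₀.subset ⟨show f x ≤ c from hx.le, hout⟩
  · obtain ⟨y, hyK, hymin⟩ :=
      (hK.diff isOpen_ball).exists_isMinOn hKne hf.continuousOn
    have hy : y ≠ x₀ := fun h => hyK.2 (h ▸ mem_ball_self hε)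
    refine ⟨min c (f y), lt_min hc (hmin y hy), fun x hx => by_contra fun hout => ?_⟩
    have hxK : x ∈ K := ⟨show f x ≤ c from (hx.trans_le (min_le_left _ _)).le, hout⟩
    exact (hx.trans_le (min_le_right _ _)).not_ge (show f y ≤ f x from hymin hxK)

namespace QuadraticCenter

noncomputable def firstIntegral (p : ℝ × ℝ) : ℝ := (p.1 ^ 2 + 2 * p.2 - 2) * Real.exp p.2

@[fun_prop]
theorem continuous_firstIntegral : Continuous firstIntegral := by
  unfold firstIntegral; fun_prop

@[simp]
theorem firstIntegral_zero : firstIntegral 0 = -2 := by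
  simp [firstIntegral]

theorem neg_two_lt_two_mul_sub_two_mul_exp {v : ℝ} (hv : v ≠ 0) :
    -2 < (2 * v - 2) * Real.exp v := by
  have h : 1 - v < Real.exp (-v) := by linarith [Real.add_one_lt_exp (neg_ne_zero.mpr hv)]
  have h' := mul_lt_mul_of_pos_right h (Real.exp_pos v)
  rw [← Real.exp_add, neg_add_cancel, Real.exp_zero] at h'
  linarith

theorem neg_two_lt_firstIntegral {p : ℝ × ℝ} (hp : p ≠ 0) : -2 < firstIntegral p := by
  obtain ⟨u, v⟩ := p
  have hsplit : firstIntegral (u, v) = u ^ 2 * Real.exp v + (2 * v - 2) * Real.exp v := by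
    simp only [firstIntegral]; ring
  rw [hsplit]
  by_cases hv : v = 0
  · subst hv
    have hu : u ≠ 0 := fun hu => hp (by simp [hu])
    simp only [Real.exp_zero]
    nlinarith [pow_pos (abs_pos.mpr hu) 2, sq_abs u]
  · nlinarith [neg_two_lt_two_mul_sub_two_mul_exp hv, mul_nonneg (sq_nonneg u) (Real.exp_pos v).le]

theorem firstIntegral_nonneg_iff {p : ℝ × ℝ} : 0 ≤ firstIntegral p ↔ 1 ≤ p.2 + p.1 ^ 2 / 2 := by
  rw [firstIntegral, mul_nonneg_iff_of_pos_right (Real.exp_pos _)]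
  constructor <;> intro h <;> linarith

/-- On `{H ≤ -k}` we have `(2 - 2v)eᵛ ≥ k`, and `e^{-v} ≥ 1 - v + v²/2` bounds `v` from below. -/
theorem bounds_of_firstIntegral_le_neg {k : ℝ} (hk : 0 < k) {p : ℝ × ℝ}
    (hp : firstIntegral p ≤ -k) :
    p.1 ^ 2 < 2 - 2 * p.2 ∧ -(1 + 4 / k) ≤ p.2 := by
  obtain ⟨u, v⟩ := p
  simp only [firstIntegral] at hp ⊢
  have hexp := Real.exp_pos v
  have hu : u ^ 2 < 2 - 2 * v := by
    by_contra! h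
    nlinarith [mul_nonneg (by linarith : (0 : ℝ) ≤ u ^ 2 + 2 * v - 2) hexp.le]
  refine ⟨hu, ?_⟩
  by_contra! hv
  set w := -v
  have hwk : k + 4 < k * w := by
    have := (div_lt_iff₀' hk).mp (by linarith : 4 / k < w - 1)
    linarith
  have hkexp : k * Real.exp w ≤ 2 + 2 * w := by
    have hmul : Real.exp v * Real.exp w = 1 := by rw [← Real.exp_add]; simp [w]
    nlinarith [mul_le_mul_of_nonneg_right hp (Real.exp_pos w).le, sq_nonneg u,
      mul_nonneg (sq_nonneg u) (mul_pos hexp (Real.exp_pos w)).le]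
  have hquad := Real.quadratic_le_exp_of_nonneg (by linarith [div_pos four_pos hk] : 0 ≤ w)
  nlinarith [mul_le_mul_of_nonneg_left hquad hk.le]

theorem isCompact_firstIntegral_le {k : ℝ} (hk : 0 < k) :
    IsCompact {p | firstIntegral p ≤ -k} := by
  have hR : 0 ≤ 4 / k := by positivity
  refine (isCompact_Icc.prod isCompact_Icc).of_isClosed_subset
    (isClosed_le (by fun_prop) continuous_const)
    (fun p hp => ?_ : _ ⊆ Icc (-(2 + 4 / k)) (2 + 4 / k) ×ˢ Icc (-(1 + 4 / k)) 1)
  obtain ⟨hu, hv⟩ := bounds_of_firstIntegral_le_neg hk hp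
  refine ⟨abs_le.mp (abs_le_of_sq_le_sq' ?_ (by positivity) |> abs_le.mpr), hv, ?_⟩
  · nlinarith [sq_nonneg (4 / k)]
  · nlinarith [sq_nonneg p.1]

theorem isCompact_firstIntegral_eq {k : ℝ} (hk : 0 < k) :
    IsCompact {p | firstIntegral p = -k} :=
  (isCompact_firstIntegral_le hk).of_isClosed_subset
    (isClosed_eq (by fun_prop) continuous_const) fun _ hp => le_of_eq hp

theorem exists_firstIntegral_eq {k : ℝ} (hk : k ∈ Icc (0 : ℝ) 2) :
    ∃ v, firstIntegral (0, v) = -k := by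
  have hcont : ContinuousOn (fun v : ℝ => firstIntegral (0, v)) (Icc 0 1) := by fun_prop
  have hends : firstIntegral (0, 0) = -2 ∧ firstIntegral (0, 1) = 0 := by
    norm_num [firstIntegral]
  obtain ⟨v, -, hv⟩ := intermediate_value_Icc zero_le_one hcont
    (show -k ∈ Icc (firstIntegral (0, 0)) (firstIntegral (0, 1)) by
      rw [hends.1, hends.2]; constructor <;> linarith [hk.1, hk.2])
  exact ⟨v, hv⟩

theorem hasDerivAt_firstIntegral_solution {u v : ℝ → ℝ} {t : ℝ}
    (hu : HasDerivAt u (v t + u t ^ 2 / 2) t) (hv : HasDerivAt v (-u t) t) :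
    HasDerivAt (fun s => firstIntegral (u s, v s)) 0 t := by
  have h := ((((hu.pow 2).add (hv.const_mul 2)).sub_const 2).mul hv.exp)
  unfold firstIntegral
  exact h.congr_deriv (by simp only [Pi.add_apply, Pi.pow_apply]; push_cast; ring)

theorem firstIntegral_solution_eq {u v : ℝ → ℝ} {s : Set ℝ} (hs : Convex ℝ s)
    (hu : ∀ t ∈ s, HasDerivAt u (v t + u t ^ 2 / 2) t) (hv : ∀ t ∈ s, HasDerivAt v (-u t) t)
    {a b : ℝ} (ha : a ∈ s) (hb : b ∈ s) :
    firstIntegral (u b, v b) = firstIntegral (u a, v a) := by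
  have h := hs.norm_image_sub_le_of_norm_hasDerivWithin_le (C := 0)
    (fun t ht => (hasDerivAt_firstIntegral_solution (hu t ht) (hv t ht)).hasDerivWithinAt)
    (fun _ _ => norm_zero.le) ha hb
  rwa [zero_mul, norm_le_zero_iff, sub_eq_zero] at h

theorem add_le_of_one_le_hasDerivAt {u u' : ℝ → ℝ} (hu : ∀ t ∈ Ici (0 : ℝ), HasDerivAt u (u' t) t)
    (hu' : ∀ t ∈ Ici (0 : ℝ), 1 ≤ u' t) {t : ℝ} (ht : 0 ≤ t) : u 0 + t ≤ u t := by
  have h := (convex_Ici (0 : ℝ)).mul_sub_le_image_sub_of_le_deriv (C := 1)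
    (fun s hs => (hu s hs).continuousAt.continuousWithinAt)
    (fun s hs => (hu s (interior_subset hs)).differentiableAt.differentiableWithinAt)
    (fun s hs => (hu s (interior_subset hs)).deriv ▸ hu' s (interior_subset hs))
    0 self_mem_Ici t ht ht
  linarith

theorem not_isBounded_solution_of_firstIntegral_nonneg {u v : ℝ → ℝ}
    (hu : ∀ t ∈ Ici (0 : ℝ), HasDerivAt u (v t + u t ^ 2 / 2) t)
    (hv : ∀ t ∈ Ici (0 : ℝ), HasDerivAt v (-u t) t) (h₀ : 0 ≤ firstIntegral (u 0, v 0)) :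
    ¬ Bornology.IsBounded ((fun t => (u t, v t)) '' Ici 0) := by
  have hgrowth : ∀ t ∈ Ici (0 : ℝ), u 0 + t ≤ u t := fun t ht =>
    add_le_of_one_le_hasDerivAt hu (fun s hs => firstIntegral_nonneg_iff.mp <|
      (firstIntegral_solution_eq (convex_Ici 0) hu hv self_mem_Ici hs).symm ▸ h₀) ht
  intro hbdd
  obtain ⟨C, hC⟩ := isBounded_iff_forall_norm_le.mp hbdd
  set T := max 0 (C + 1 - u 0)
  have hT : T ∈ Ici (0 : ℝ) := mem_Ici.mpr (le_max_left _ _)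
  have hnorm := (norm_fst_le (u T, v T)).trans (hC _ ⟨T, hT, rfl⟩)
  have := hgrowth T hT
  linarith [le_abs_self (u T), Real.norm_eq_abs (u T), le_max_right 0 (C + 1 - u 0)]

end QuadraticCenter

open QuadraticCenter in
/-- For the planar system `u' = v + u²/2`, `v' = -u` with first integral
`H(u,v) = (u² + 2v - 2)eᵛ`: for `0 < k < 2` the level set `{H = -k}` is a
nonempty compact invariant set not containing the unique equilibrium `(0,0)`;
the level sets shrink to the origin as `k → 2⁻`; and any globally defined
solution starting on or above the parabola `v = 1 - u²/2` (the level `k = 0`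
and the region above it) is unbounded. -/
theorem stmt_6 :
    (∀ p : ℝ × ℝ, (p.2 + p.1 ^ 2 / 2 = 0 ∧ -p.1 = 0) ↔ p = 0) ∧
    (∀ k ∈ Set.Ioo (0 : ℝ) 2,
      ({p : ℝ × ℝ | (p.1 ^ 2 + 2 * p.2 - 2) * Real.exp p.2 = -k}).Nonempty ∧
      IsCompact {p : ℝ × ℝ | (p.1 ^ 2 + 2 * p.2 - 2) * Real.exp p.2 = -k} ∧
      (0 : ℝ × ℝ) ∉ {p : ℝ × ℝ | (p.1 ^ 2 + 2 * p.2 - 2) * Real.exp p.2 = -k} ∧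
      (∀ u v : ℝ → ℝ,
        (∀ t, HasDerivAt u (v t + (u t) ^ 2 / 2) t) →
        (∀ t, HasDerivAt v (-(u t)) t) →
        ((u 0, v 0) ∈ {p : ℝ × ℝ | (p.1 ^ 2 + 2 * p.2 - 2) * Real.exp p.2 = -k}) →
        ∀ t, (u t, v t) ∈ {p : ℝ × ℝ | (p.1 ^ 2 + 2 * p.2 - 2) * Real.exp p.2 = -k})) ∧
    (∀ ε > (0 : ℝ), ∃ k0 ∈ Set.Ioo (0 : ℝ) 2, ∀ k ∈ Set.Ioo k0 2,
      {p : ℝ × ℝ | (p.1 ^ 2 + 2 * p.2 - 2) * Real.exp p.2 = -k} ⊆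
        Metric.ball (0 : ℝ × ℝ) ε) ∧
    (∀ u v : ℝ → ℝ,
      (∀ t ∈ Set.Ici (0 : ℝ), HasDerivAt u (v t + (u t) ^ 2 / 2) t) →
      (∀ t ∈ Set.Ici (0 : ℝ), HasDerivAt v (-(u t)) t) →
      1 - (u 0) ^ 2 / 2 ≤ v 0 →
      ¬ Bornology.IsBounded ((fun t => (u t, v t)) '' Set.Ici (0 : ℝ))) := by
  refine ⟨fun ⟨u, v⟩ => ?_, fun k hk => ⟨?_, isCompact_firstIntegral_eq hk.1, ?_, ?_⟩, ?_,
    fun u v hu hv h₀ => not_isBounded_solution_of_firstIntegral_nonneg hu hv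
      (firstIntegral_nonneg_iff.mpr (by simp only; linarith))⟩
  · simp only [Prod.mk_eq_zero, neg_eq_zero]
    constructor
    · rintro ⟨hv, rfl⟩; simpa using hv
    · rintro ⟨rfl, rfl⟩; simp
  · obtain ⟨v, hv⟩ := exists_firstIntegral_eq (Ioo_subset_Icc_self hk)
    exact ⟨(0, v), hv⟩
  · intro h₀
    have : (-2 : ℝ) = -k := firstIntegral_zero ▸ h₀
    linarith [hk.2]
  · intro u v hu hv h₀ t
    exact (firstIntegral_solution_eq convex_univ (fun t _ => hu t) (fun t _ => hv t)
      (mem_univ 0) (mem_univ t)).trans h₀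
  · intro ε hε
    obtain ⟨c, hc, hsub⟩ := exists_sublevel_subset_ball continuous_firstIntegral
      (fun _ hp => firstIntegral_zero ▸ neg_two_lt_firstIntegral hp)
      (by norm_num : firstIntegral 0 < -1) (isCompact_firstIntegral_le one_pos) hε
    rw [firstIntegral_zero] at hc
    refine ⟨max 1 (-c), ⟨by positivity, max_lt one_lt_two (by linarith)⟩, fun k hk p hp => ?_⟩
    exact hsub (show firstIntegral p < c by
      linarith [show firstIntegral p = -k from hp, hk.1, le_max_right 1 (-c)])
end
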